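/- Let L be a Lipschitz seminorm on an order-unit space A, with metric ρ_L on S(A), and let L_{ρ_L}(a) = sup{|μ(a) - ν(a)|/ρ_L(μ,ν) : μ ≠ ν ∈ S(A)}. Then {a ∈ A : L_{ρ_L}(a) ≤ 1} equals the norm closure in A of L₁ = {a ∈ A : L(a) ≤ 1}. In particular L_{ρ_L} is the largest lower semicontinuous seminorm on A dominated by L, and ρ_{L_{ρ_L}} = ρ_L. -/

import Mathlib

open scoped ENNReal

/-- A state of an order-unit space `(A, e)`. -/
def IsState {A : Type*} [NormedAddCommGroup A] [NormedSpace ℝ A] (e : A)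
    (μ : A →L[ℝ] ℝ) : Prop :=
  μ e = 1 ∧ ‖μ‖ = 1

/-- The metric `ρ_L` on the state space: `ρ_L(μ,ν) = sup {|μ(a) - ν(a)| : L(a) ≤ 1}`. -/
noncomputable def rhoL {A : Type*} [NormedAddCommGroup A] [NormedSpace ℝ A]
    (L : A → ℝ) (μ ν : A →L[ℝ] ℝ) : ℝ≥0∞ :=
  ⨆ (a : A) (_ : L a ≤ 1), ENNReal.ofReal |μ a - ν a|

/-- The Lipschitz seminorm `L_{ρ_L}` of the affine function `â` on `(S(A), ρ_L)`:
`L_{ρ_L}(a) = sup {|μ(a) - ν(a)|/ρ_L(μ,ν) : μ ≠ ν ∈ S(A)}`. -/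
noncomputable def LfromRho {A : Type*} [NormedAddCommGroup A] [NormedSpace ℝ A]
    (e : A) (L : A → ℝ) (a : A) : ℝ≥0∞ :=
  ⨆ (μ : A →L[ℝ] ℝ) (ν : A →L[ℝ] ℝ) (_ : IsState e μ) (_ : IsState e ν) (_ : μ ≠ ν),
    ENNReal.ofReal |μ a - ν a| / rhoL L μ ν

/-! The inclusion `closure L₁ ⊆ {L_{ρ_L} ≤ 1}` holds because each `a ↦ |μ a - ν a|` is continuous
and bounded by `ρ_L(μ, ν)` on `L₁`. Conversely, if `a ∉ closure L₁`, Hahn–Banach separates `a`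
from the closed convex set `closure L₁` by a functional `φ`; as `L₁` contains the line `ℝ e`,
`φ e = 0`, and such a functional is a multiple `‖φ‖ (μ - ν)` of a difference of two states
(M. Riesz extension theorem). This pair of states witnesses `L_{ρ_L}(a) > 1`. Domination by `L`
and maximality then follow by comparing unit balls, since a positively homogeneous function is
determined by its unit ball.
-/

structure IsOrderUnit {A : Type*} [NormedAddCommGroup A] [Module ℝ A] [PartialOrder A]
    (e : A) : Prop where
  ne_zero : e ≠ 0
  exists_le_smul : ∀ a : A, ∃ r : ℝ, a ≤ r • e
  le_zero_of_forall_le_smul : ∀ a : A, (∀ r : ℝ, 0 < r → a ≤ r • e) → a ≤ 0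
  norm_eq_sInf : ∀ a : A, ‖a‖ = sInf {r : ℝ | 0 ≤ r ∧ -(r • e) ≤ a ∧ a ≤ r • e}

namespace IsOrderUnit

variable {A : Type*} [NormedAddCommGroup A] [NormedSpace ℝ A] [PartialOrder A] {e : A}

theorem norm_le_of_neg_smul_le_of_le_smul (he : IsOrderUnit e) {a : A} {r : ℝ} (hr : 0 ≤ r)
    (h₁ : -(r • e) ≤ a) (h₂ : a ≤ r • e) : ‖a‖ ≤ r := by
  rw [he.norm_eq_sInf]
  exact csInf_le ⟨0, fun _ hs => hs.1⟩ ⟨hr, h₁, h₂⟩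

variable [IsOrderedAddMonoid A] [PosSMulMono ℝ A]

theorem nonneg (he : IsOrderUnit e) : 0 ≤ e := by
  obtain ⟨r, hr, hre, -⟩ : {r : ℝ | 0 ≤ r ∧ -(r • e) ≤ e ∧ e ≤ r • e}.Nonempty := by
    by_contra hS
    apply he.ne_zero
    rw [← norm_eq_zero, he.norm_eq_sInf, Set.not_nonempty_iff_eq_empty.mp hS, Real.sInf_empty]
  have h : 0 ≤ (1 + r) • e := by
    rw [add_smul, one_smul]; exact neg_le_iff_add_nonneg.mp hre
  simpa [smul_smul, inv_mul_cancel₀ (by positivity : 1 + r ≠ 0)] using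
    smul_nonneg (inv_nonneg.mpr (by positivity : (0 : ℝ) ≤ 1 + r)) h

theorem smul_mono (he : IsOrderUnit e) : Monotone fun r : ℝ => r • e :=
  fun _ _ h => smul_le_smul_of_nonneg_right h he.nonneg

theorem le_norm_smul (he : IsOrderUnit e) (a : A) : a ≤ ‖a‖ • e := by
  set S := {r : ℝ | 0 ≤ r ∧ -(r • e) ≤ a ∧ a ≤ r • e}
  have hS : S.Nonempty := by
    obtain ⟨r, hr⟩ := he.exists_le_smul a
    obtain ⟨s, hs⟩ := he.exists_le_smul (-a)
    refine ⟨|r| + |s|, by positivity, ?_, hr.trans (he.smul_mono ?_)⟩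
    · exact neg_le.mp (hs.trans (he.smul_mono (by linarith [le_abs_self s, abs_nonneg r])))
    · linarith [le_abs_self r, abs_nonneg s]
  have hε : ∀ ε : ℝ, 0 < ε → a ≤ (‖a‖ + ε) • e := fun ε hε => by
    obtain ⟨s, hs, hslt⟩ := exists_lt_of_csInf_lt hS
      (show sInf S < ‖a‖ + ε by rw [← he.norm_eq_sInf]; linarith)
    exact hs.2.2.trans (he.smul_mono hslt.le)
  refine sub_nonpos.mp (he.le_zero_of_forall_le_smul _ fun r hr => ?_)
  rw [sub_le_iff_le_add, ← add_smul, add_comm r]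
  exact hε r hr

theorem neg_norm_smul_le (he : IsOrderUnit e) (a : A) : -(‖a‖ • e) ≤ a := by
  simpa using neg_le_neg (he.le_norm_smul (-a))

theorem nonneg_of_zero_le_smul (he : IsOrderUnit e) {c : ℝ} (h : 0 ≤ c • e) : 0 ≤ c := by
  by_contra! hc
  have : c • e ≤ 0 := smul_nonpos_of_nonpos_of_nonneg hc.le he.nonneg
  exact he.ne_zero ((smul_eq_zero.mp (le_antisymm this h)).resolve_left hc.ne)

theorem abs_apply_le_of_nonneg (he : IsOrderUnit e) (g : A →ₗ[ℝ] ℝ)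
    (hg : ∀ x, 0 ≤ x → 0 ≤ g x) (x : A) : |g x| ≤ g e * ‖x‖ := by
  have h₁ := hg _ (sub_nonneg.mpr (he.le_norm_smul x))
  have h₂ := hg _ (neg_le_iff_add_nonneg'.mp (he.neg_norm_smul_le x))
  simp only [map_sub, map_add, map_smul, smul_eq_mul] at h₁ h₂
  exact abs_le.mpr ⟨by linarith, by linarith⟩

theorem exists_isState (he : IsOrderUnit e) (g : A →ₗ[ℝ] ℝ) (hg : ∀ x, 0 ≤ x → 0 ≤ g x)
    (hge : g e = 1) : ∃ μ : A →L[ℝ] ℝ, IsState e μ ∧ ∀ x, μ x = g x := by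
  let μ := g.mkContinuous 1 fun x => by simpa [hge] using he.abs_apply_le_of_nonneg g hg x
  have hμe : μ e = 1 := hge
  have hnorm_e : ‖e‖ ≤ 1 :=
    he.norm_le_of_neg_smul_le_of_le_smul zero_le_one
      (by simpa using (neg_nonpos.mpr he.nonneg).trans he.nonneg) (by rw [one_smul])
  refine ⟨μ, ⟨hμe, le_antisymm (g.mkContinuous_norm_le zero_le_one _) ?_⟩, fun _ => rfl⟩
  calc (1 : ℝ) = |μ e| := by rw [hμe, abs_one]
    _ ≤ ‖μ‖ * ‖e‖ := μ.le_opNorm e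
    _ ≤ ‖μ‖ := mul_le_of_le_one_right (norm_nonneg _) hnorm_e

def intervalEpigraphCone (f : A →L[ℝ] ℝ) : PointedCone ℝ (A × ℝ) where
  carrier := {p | ∃ y, 0 ≤ y ∧ y ≤ p.1 ∧ f y ≤ p.2}
  zero_mem' := ⟨0, le_rfl, le_rfl, by simp⟩
  add_mem' := by
    rintro _ _ ⟨y₁, hy₁, hyw₁, hys₁⟩ ⟨y₂, hy₂, hyw₂, hys₂⟩
    exact ⟨y₁ + y₂, add_nonneg hy₁ hy₂, add_le_add hyw₁ hyw₂, by simpa using add_le_add hys₁ hys₂⟩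
  smul_mem' := by
    rintro c ⟨w, s⟩ ⟨y, hy, hyw, hys⟩
    refine ⟨(c : ℝ) • y, smul_nonneg c.2 hy, smul_le_smul_of_nonneg_left hyw c.2, ?_⟩
    show f ((c : ℝ) • y) ≤ (c : ℝ) * s
    rw [map_smul, smul_eq_mul]; exact mul_le_mul_of_nonneg_left hys c.2

theorem exists_linearMap_nonneg_and_add_nonneg (he : IsOrderUnit e) (f : A →L[ℝ] ℝ) :
    ∃ g : A →ₗ[ℝ] ℝ, g e = ‖f‖ ∧ (∀ x, 0 ≤ x → 0 ≤ g x) ∧ ∀ x, 0 ≤ x → 0 ≤ g x + f x := by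
  set K := intervalEpigraphCone f
  -- `g` will be `w ↦ G (w, 0)` for a functional `G ≥ 0` on `K` with `G (c • e, s) = c * ‖f‖ + s`;
  -- that prescription is `≥ 0` on `K` since `|f y| ≤ ‖f‖ * c` whenever `0 ≤ y ≤ c • e`.
  let φ : A × ℝ →ₗ.[ℝ] ℝ :=
    (LinearPMap.mkSpanSingleton e ‖f‖ he.ne_zero).coprod (LinearMap.id.toPMap ⊤)
  have hφ : ∀ (c s : ℝ) (h : (c • e, s) ∈ φ.domain), φ ⟨(c • e, s), h⟩ = c * ‖f‖ + s := by
    intro c s h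
    simp only [φ, LinearPMap.coprod_apply, LinearPMap.mkSpanSingleton'_apply, RingHom.id_apply,
      smul_eq_mul]
    rfl
  have hmem : ∀ c s : ℝ, (c • e, s) ∈ φ.domain := fun c s =>
    ⟨Submodule.smul_mem _ c (Submodule.mem_span_singleton_self e), trivial⟩
  have nonneg : ∀ x : φ.domain, (x : A × ℝ) ∈ K → 0 ≤ φ x := by
    rintro ⟨⟨w, s⟩, hw, hs⟩ ⟨y, hy, hyw, hys⟩
    obtain ⟨c, rfl⟩ := Submodule.mem_span_singleton.mp hw
    have hc : 0 ≤ c := he.nonneg_of_zero_le_smul (hy.trans hyw)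
    have hy_norm : ‖y‖ ≤ c :=
      he.norm_le_of_neg_smul_le_of_le_smul hc ((neg_nonpos.mpr (hy.trans hyw)).trans hy) hyw
    have hfy : -(‖f‖ * c) ≤ f y :=
      neg_le_of_abs_le ((f.le_opNorm y).trans (mul_le_mul_of_nonneg_left hy_norm (norm_nonneg f)))
    linarith [hφ c s ⟨hw, hs⟩]
  have dense : ∀ p : A × ℝ, ∃ x : φ.domain, (x : A × ℝ) + p ∈ K := fun ⟨w, s⟩ =>
    ⟨⟨(‖w‖ • e, -s), hmem _ _⟩,
      0, le_rfl, neg_le_iff_add_nonneg'.mp (he.neg_norm_smul_le w), by simp⟩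
  obtain ⟨G, hGφ, hGK⟩ := riesz_extension K φ nonneg dense
  have hGφ' : ∀ c s : ℝ, G (c • e, s) = c * ‖f‖ + s := fun c s =>
    (hGφ ⟨_, hmem c s⟩).trans (hφ c s _)
  have hG₀₁ : G (0, 1) = 1 := by simpa using hGφ' 0 1
  have hG : ∀ w s, G (w, s) = G (w, 0) + s := fun w s => by
    rw [show (w, s) = (w, 0) + s • ((0 : A), (1 : ℝ)) by simp, map_add, map_smul, hG₀₁,
      smul_eq_mul, mul_one]
  refine ⟨G.comp (LinearMap.inl ℝ A ℝ), ?_, fun x hx => ?_, fun x hx => ?_⟩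
  · simpa using hGφ' 1 0
  · exact hGK _ ⟨0, le_rfl, hx, by simp⟩
  · simpa [← hG] using hGK (x, f x) ⟨x, hx, le_rfl, le_rfl⟩

theorem exists_states_eq_norm_mul_sub (he : IsOrderUnit e) (f : A →L[ℝ] ℝ) (hfe : f e = 0)
    (hf : f ≠ 0) :
    ∃ μ ν : A →L[ℝ] ℝ, IsState e μ ∧ IsState e ν ∧ ∀ x, f x = ‖f‖ * (μ x - ν x) := by
  obtain ⟨g, hge, hg, hgf⟩ := he.exists_linearMap_nonneg_and_add_nonneg f
  have ht : 0 < ‖f‖ := norm_pos_iff.mpr hf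
  obtain ⟨μ, hμ, hμg⟩ := he.exists_isState (‖f‖⁻¹ • (g + f.toLinearMap))
    (fun x hx => by simpa [mul_add] using mul_nonneg (inv_nonneg.mpr ht.le) (hgf x hx))
    (by simp [hge, hfe, ht.ne'])
  obtain ⟨ν, hν, hνg⟩ := he.exists_isState (‖f‖⁻¹ • g)
    (fun x hx => by simpa using mul_nonneg (inv_nonneg.mpr ht.le) (hg x hx))
    (by simp [hge, ht.ne'])
  refine ⟨μ, ν, hμ, hν, fun x => ?_⟩
  simp only [hμg, hνg, LinearMap.smul_apply, LinearMap.add_apply, smul_eq_mul,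
    ContinuousLinearMap.coe_coe]
  field_simp
  ring

end IsOrderUnit

theorem le_of_le_one_imp_le_one {E : Type*} [AddCommGroup E] [Module ℝ E] {N₁ N₂ : E → ℝ≥0∞}
    (h₁ : ∀ c : ℝ, 0 ≤ c → ∀ a, N₁ (c • a) = ENNReal.ofReal c * N₁ a)
    (h₂ : ∀ c : ℝ, 0 ≤ c → ∀ a, N₂ (c • a) = ENNReal.ofReal c * N₂ a)
    (h : ∀ a, N₁ a ≤ 1 → N₂ a ≤ 1) (a : E) : N₂ a ≤ N₁ a := by
  refine le_of_forall_gt_imp_ge_of_dense fun c hc => ?_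
  rcases eq_or_ne c ⊤ with rfl | hc_top
  · exact le_top
  set r := c.toReal
  have hr : 0 < r := ENNReal.toReal_pos (pos_of_gt hc).ne' hc_top
  have hrc : ENNReal.ofReal r = c := ENNReal.ofReal_toReal hc_top
  have hscaled : N₁ (r⁻¹ • a) ≤ 1 := by
    rw [h₁ _ (inv_nonneg.mpr hr.le)]
    calc ENNReal.ofReal r⁻¹ * N₁ a ≤ ENNReal.ofReal r⁻¹ * ENNReal.ofReal r := by
          rw [hrc]; exact mul_le_mul_right hc.le _
      _ = 1 := by rw [← ENNReal.ofReal_mul (inv_nonneg.mpr hr.le), inv_mul_cancel₀ hr.ne',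
          ENNReal.ofReal_one]
  calc N₂ a = ENNReal.ofReal r * N₂ (r⁻¹ • a) := by rw [← h₂ _ hr.le, smul_inv_smul₀ hr.ne']
    _ ≤ ENNReal.ofReal r * 1 := mul_le_mul_right (h _ hscaled) _
    _ = c := by rw [mul_one, hrc]

section LfromRho

variable {A : Type*} [NormedAddCommGroup A] [NormedSpace ℝ A] {e : A} {L : A → ℝ}

theorem ofReal_abs_sub_le_rhoL {b : A} (hb : L b ≤ 1) (μ ν : A →L[ℝ] ℝ) :
    ENNReal.ofReal |μ b - ν b| ≤ rhoL L μ ν :=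
  le_iSup₂_of_le (f := fun b (_ : L b ≤ 1) => ENNReal.ofReal |μ b - ν b|) b hb le_rfl

theorem closure_subset_setOf_ofReal_abs_sub_le_rhoL (μ ν : A →L[ℝ] ℝ) :
    closure {a | L a ≤ 1} ⊆ {a | ENNReal.ofReal |μ a - ν a| ≤ rhoL L μ ν} :=
  closure_minimal (fun _ hb => ofReal_abs_sub_le_rhoL hb μ ν)
    (isClosed_le (ENNReal.continuous_ofReal.comp (by fun_prop)) continuous_const)

theorem LfromRho_le_one_iff {a : A} :
    LfromRho e L a ≤ 1 ↔ ∀ μ ν : A →L[ℝ] ℝ, IsState e μ → IsState e ν → μ ≠ ν →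
      ENNReal.ofReal |μ a - ν a| ≤ rhoL L μ ν := by
  simp only [LfromRho, iSup_le_iff,
    ENNReal.div_le_iff_le_mul (Or.inr ENNReal.one_ne_top) (Or.inr one_ne_zero), one_mul]

theorem LfromRho_le_one_of_le_one {b : A} (hb : L b ≤ 1) : LfromRho e L b ≤ 1 :=
  LfromRho_le_one_iff.mpr fun μ ν _ _ _ => ofReal_abs_sub_le_rhoL hb μ ν

theorem LfromRho_smul {c : ℝ} (hc : 0 ≤ c) (a : A) :
    LfromRho e L (c • a) = ENNReal.ofReal c * LfromRho e L a := by
  simp only [LfromRho, ENNReal.mul_iSup, map_smul, smul_eq_mul, ← mul_sub, abs_mul,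
    abs_of_nonneg hc, ENNReal.ofReal_mul hc, mul_div_assoc]

theorem LfromRho_le_ofReal (hL : ∀ c : ℝ, 0 ≤ c → ∀ a, L (c • a) = c * L a) (a : A) :
    LfromRho e L a ≤ ENNReal.ofReal (L a) :=
  le_of_le_one_imp_le_one (fun c hc a => by rw [hL c hc, ENNReal.ofReal_mul hc])
    (fun _ hc => LfromRho_smul hc)
    (fun _ hb => LfromRho_le_one_of_le_one (ENNReal.ofReal_le_one.mp hb)) a

theorem iSup_LfromRho_le_one_eq_rhoL {μ ν : A →L[ℝ] ℝ} (hμ : IsState e μ) (hν : IsState e ν) :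
    ⨆ (a : A) (_ : LfromRho e L a ≤ 1), ENNReal.ofReal |μ a - ν a| = rhoL L μ ν := by
  refine le_antisymm (iSup₂_le fun a ha => ?_)
    (iSup₂_mono' fun b hb => ⟨b, LfromRho_le_one_of_le_one hb, le_rfl⟩)
  rcases eq_or_ne μ ν with rfl | hne
  · simp
  · exact LfromRho_le_one_iff.mp ha μ ν hμ hν hne

end LfromRho

section Seminorm

variable {A : Type*} [NormedAddCommGroup A] [NormedSpace ℝ A] [PartialOrder A]
  [IsOrderedAddMonoid A] [PosSMulMono ℝ A] {e : A}

theorem exists_states_rhoL_lt (he : IsOrderUnit e) (p : Seminorm ℝ A) (hpe : p e = 0) {a : A}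
    (ha : a ∉ closure {x | p x ≤ 1}) :
    ∃ μ ν : A →L[ℝ] ℝ, IsState e μ ∧ IsState e ν ∧ μ ≠ ν ∧
      rhoL p μ ν < ENNReal.ofReal |μ a - ν a| := by
  have hconvex : Convex ℝ {x | p x ≤ 1} := p.closedBall_zero_eq ▸ p.convex_closedBall 0 1
  obtain ⟨φ, u, hφu, huφ⟩ :=
    geometric_hahn_banach_closed_point hconvex.closure isClosed_closure ha
  have hlt : ∀ x, p x ≤ 1 → φ x < u := fun x hx => hφu x (subset_closure hx)
  have hu : 0 < u := by simpa using hlt 0 (by simp)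
  -- `φ` is bounded above on the line `ℝ • e ⊆ {p ≤ 1}`
  have hφe : φ e = 0 := by
    by_contra h
    have := hlt ((u / φ e) • e) (by simp [map_smul_eq_mul, hpe])
    rw [map_smul, smul_eq_mul, div_mul_cancel₀ _ h] at this
    exact this.false
  have hφb : ∀ x, p x ≤ 1 → |φ x| ≤ u := fun x hx =>
    abs_le.mpr ⟨by linarith [map_neg φ x, hlt (-x) (by rwa [map_neg_eq_map])], (hlt x hx).le⟩
  have hφ : φ ≠ 0 := by rintro rfl; simp at huφ; linarith
  have ht : 0 < ‖φ‖ := norm_pos_iff.mpr hφ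
  obtain ⟨μ, ν, hμ, hν, hφμν⟩ := he.exists_states_eq_norm_mul_sub φ hφe hφ
  have hdiff : ∀ x, μ x - ν x = φ x / ‖φ‖ := fun x => by
    rw [hφμν, mul_div_cancel_left₀ _ ht.ne']
  refine ⟨μ, ν, hμ, hν, fun h => hφ (ContinuousLinearMap.ext fun x => by simp [hφμν, h]), ?_⟩
  calc rhoL p μ ν ≤ ENNReal.ofReal (u / ‖φ‖) := iSup₂_le fun b hb => by
        rw [hdiff, abs_div, abs_norm]
        gcongr
        exact hφb b hb
    _ < ENNReal.ofReal |μ a - ν a| := by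
        have : u / ‖φ‖ < |φ a / ‖φ‖| := (by gcongr : u / ‖φ‖ < φ a / ‖φ‖).trans_le (le_abs_self _)
        rw [hdiff, ENNReal.ofReal_lt_ofReal_iff']
        exact ⟨this, (div_pos hu ht).trans this⟩

theorem setOf_LfromRho_le_one_eq_closure (he : IsOrderUnit e) (p : Seminorm ℝ A)
    (hpe : p e = 0) : {a | LfromRho e p a ≤ 1} = closure {a | p a ≤ 1} := by
  refine subset_antisymm (fun a ha => ?_) fun a ha => LfromRho_le_one_iff.mpr fun μ ν _ _ _ =>
    closure_subset_setOf_ofReal_abs_sub_le_rhoL μ ν ha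
  by_contra h
  obtain ⟨μ, ν, hμ, hν, hne, hlt⟩ := exists_states_rhoL_lt he p hpe h
  exact hlt.not_ge (LfromRho_le_one_iff.mp ha μ ν hμ hν hne)

theorem ofReal_le_LfromRho (he : IsOrderUnit e) (p : Seminorm ℝ A) (hpe : p e = 0) {M : A → ℝ}
    (hM : ∀ c : ℝ, 0 ≤ c → ∀ a, M (c • a) = c * M a) (hMc : IsClosed {a | M a ≤ 1})
    (hMp : ∀ a, M a ≤ p a) (a : A) : ENNReal.ofReal (M a) ≤ LfromRho e p a := by
  refine le_of_le_one_imp_le_one (N₂ := fun a => ENNReal.ofReal (M a))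
    (fun _ hc => LfromRho_smul hc) (fun c hc a => by rw [hM c hc, ENNReal.ofReal_mul hc])
    (fun b hb => ?_) a
  have hb' : b ∈ closure {x | p x ≤ 1} := (setOf_LfromRho_le_one_eq_closure he p hpe).subset hb
  exact ENNReal.ofReal_le_one.mpr (closure_minimal (fun x hx => (hMp x).trans hx) hMc hb')

end Seminorm

/-- `{a : L_{ρ_L}(a) ≤ 1}` is the norm closure of `L₁ = {a : L(a) ≤ 1}`;
`L_{ρ_L}` is the largest lower semicontinuous seminorm dominated by `L`; and
`ρ_{L_{ρ_L}} = ρ_L`. -/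
theorem stmt_9 {A : Type*} [NormedAddCommGroup A] [NormedSpace ℝ A] [PartialOrder A]
    (e : A) (he : e ≠ 0)
    (haddle : ∀ a b c : A, a ≤ b → a + c ≤ b + c)
    (hsmulle : ∀ (r : ℝ) (a : A), 0 ≤ r → 0 ≤ a → 0 ≤ r • a)
    (hunit : ∀ a : A, ∃ r : ℝ, a ≤ r • e)
    (harch : ∀ a : A, (∀ r : ℝ, 0 < r → a ≤ r • e) → a ≤ 0)
    (hnorm : ∀ a : A, ‖a‖ = sInf {r : ℝ | 0 ≤ r ∧ -(r • e) ≤ a ∧ a ≤ r • e})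
    (L : A → ℝ)
    (hLadd : ∀ a b : A, L (a + b) ≤ L a + L b)
    (hLsmul : ∀ (t : ℝ) (a : A), L (t • a) = |t| * L a)
    (hLnull : ∀ a : A, L a = 0 ↔ ∃ t : ℝ, a = t • e) :
    {a : A | LfromRho e L a ≤ 1} = closure {a : A | L a ≤ 1} ∧
    (∀ a : A, LfromRho e L a ≤ ENNReal.ofReal (L a)) ∧
    (∀ M : A → ℝ, (∀ a b : A, M (a + b) ≤ M a + M b) →
      (∀ (t : ℝ) (a : A), M (t • a) = |t| * M a) →
      IsClosed {a : A | M a ≤ 1} →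
      (∀ a : A, M a ≤ L a) →
      ∀ a : A, ENNReal.ofReal (M a) ≤ LfromRho e L a) ∧
    (∀ μ ν : A →L[ℝ] ℝ, IsState e μ → IsState e ν →
      (⨆ (a : A) (_ : LfromRho e L a ≤ 1), ENNReal.ofReal |μ a - ν a|) = rhoL L μ ν) := by
  have : IsOrderedAddMonoid A := { add_le_add_left := fun a b h c => haddle a b c h }
  have : PosSMulMono ℝ A := PosSMulMono.of_smul_nonneg fun r hr a ha => hsmulle r a hr ha
  have horder : IsOrderUnit e := ⟨he, hunit, harch, hnorm⟩
  let p : Seminorm ℝ A := Seminorm.of L hLadd (by simpa only [Real.norm_eq_abs] using hLsmul)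
  have hpe : p e = 0 := (hLnull e).mpr ⟨1, (one_smul ℝ e).symm⟩
  have hhom : ∀ {N : A → ℝ}, (∀ (t : ℝ) (a : A), N (t • a) = |t| * N a) →
      ∀ c : ℝ, 0 ≤ c → ∀ a, N (c • a) = c * N a := fun hN c hc a => by
    rw [hN, abs_of_nonneg hc]
  exact ⟨setOf_LfromRho_le_one_eq_closure horder p hpe, LfromRho_le_ofReal (hhom hLsmul),
    fun M _ hM hMc hML => ofReal_le_LfromRho horder p hpe (hhom hM) hMc hML,
    fun μ ν hμ hν => iSup_LfromRho_le_one_eq_rhoL hμ hν⟩
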